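/- For the evidence-decorated simply-typed gradual calculus with ascriptions, reduction preserves types: if ∅ ⊢ t : G and t ↦ t' (where t' is a term, not error), then ∅ ⊢ t' : G. -/
import Mathlib


inductive GType : Type
  | int
  | bool
  | unk
  | arrow (a b : GType)
deriving DecidableEq

/-- Consistency on gradual types. -/
inductive Consist : GType → GType → Prop
  | unkL (G : GType) : Consist GType.unk G
  | unkR (G : GType) : Consist G GType.unk
  | int : Consist GType.int GType.int
  | bool : Consist GType.bool GType.bool
  | arrow {a a' b b' : GType} : Consist a a' → Consist b b' →
      Consist (GType.arrow a b) (GType.arrow a' b')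

/-- Syntactic precision on gradual types. -/
inductive SPrec : GType → GType → Prop
  | unk (G : GType) : SPrec G GType.unk
  | int : SPrec GType.int GType.int
  | bool : SPrec GType.bool GType.bool
  | arrow {a a' b b' : GType} : SPrec a a' → SPrec b b' →
      SPrec (GType.arrow a b) (GType.arrow a' b')

/-- Partial precision meet on gradual types. -/
def gmeet : GType → GType → Option GType
  | g, GType.unk => some g
  | GType.unk, g => some g
  | GType.int, GType.int => some GType.int
  | GType.bool, GType.bool => some GType.bool
  | GType.arrow a b, GType.arrow a' b' =>
      match gmeet a a', gmeet b b' with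
      | some x, some y => some (GType.arrow x y)
      | _, _ => none
  | _, _ => none

mutual
/-- Terms of the evidence-decorated gradual calculus.
`val ε u G` is an evidence value `ε u` ascribed at type `G`;
`asc ε t G` is an evidence ascription of an arbitrary term. -/
inductive Tm : Type
  | var (x : String)
  | val (ε : GType) (u : Raw) (G : GType)
  | app (t1 t2 : Tm)
  | asc (ε : GType) (t : Tm) (G : GType)

/-- Raw values: booleans, integers, lambda abstractions. -/
inductive Raw : Type
  | rbool (b : Bool)
  | rint (n : Int)
  | rlam (x : String) (G : GType) (t : Tm)
end

mutual
def substTm (x : String) (v : Tm) : Tm → Tm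
  | Tm.var y => if y = x then v else Tm.var y
  | Tm.val ε u G => Tm.val ε (substRaw x v u) G
  | Tm.app t1 t2 => Tm.app (substTm x v t1) (substTm x v t2)
  | Tm.asc ε t G => Tm.asc ε (substTm x v t) G

def substRaw (x : String) (v : Tm) : Raw → Raw
  | Raw.rbool b => Raw.rbool b
  | Raw.rint n => Raw.rint n
  | Raw.rlam y G t => if y = x then Raw.rlam y G t else Raw.rlam y G (substTm x v t)
end

/-- Context update. -/
def upd (Γ : String → Option GType) (x : String) (G : GType) : String → Option GType :=
  fun y => if y = x then some G else Γ y

/-- The empty typing context. -/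
def emptyCtx : String → Option GType := fun _ => none

mutual
/-- Typing of terms: standard simply-typed rules with exact type equality at
application; consistency, justified by evidence `ε` (with `ε ⊑` both types),
appears only at (value) ascriptions. -/
inductive HasTy : (String → Option GType) → Tm → GType → Prop
  | var {Γ x G} : Γ x = some G → HasTy Γ (Tm.var x) G
  | val {Γ ε u G1 G2} : RawTy Γ u G1 → SPrec ε G1 → SPrec ε G2 →
      HasTy Γ (Tm.val ε u G2) G2
  | app {Γ t1 t2 G1 G2} : HasTy Γ t1 (GType.arrow G1 G2) → HasTy Γ t2 G1 →
      HasTy Γ (Tm.app t1 t2) G2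
  | asc {Γ ε t G1 G2} : HasTy Γ t G1 → SPrec ε G1 → SPrec ε G2 →
      HasTy Γ (Tm.asc ε t G2) G2

/-- Typing of raw values. -/
inductive RawTy : (String → Option GType) → Raw → GType → Prop
  | rbool {Γ b} : RawTy Γ (Raw.rbool b) GType.bool
  | rint {Γ n} : RawTy Γ (Raw.rint n) GType.int
  | rlam {Γ x G1 t G2} : HasTy (upd Γ x G1) t G2 →
      RawTy Γ (Raw.rlam x G1 t) (GType.arrow G1 G2)
end

/-- Domain of a function-type evidence. -/
def gdom : GType → Option GType
  | GType.arrow a _ => some a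
  | _ => none

/-- Codomain of a function-type evidence. -/
def gcod : GType → Option GType
  | GType.arrow _ b => some b
  | _ => none

/-- Result of a reduction step: a term or a runtime error. -/
inductive Res : Type
  | term (t : Tm)
  | error

/-- Small-step reduction. Errors arise exactly from undefined meets. -/
inductive Step : Tm → Res → Prop
  | ascv {ε1 ε2 ε : GType} {u G1 G2} : gmeet ε1 ε2 = some ε →
      Step (Tm.asc ε2 (Tm.val ε1 u G1) G2) (Res.term (Tm.val ε u G2))
  | ascvErr {ε1 ε2 : GType} {u G1 G2} : gmeet ε1 ε2 = none →
      Step (Tm.asc ε2 (Tm.val ε1 u G1) G2) Res.error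
  | beta {ε1 ε2 εd εc ε : GType} {x Gx t GA GB u Gu} :
      gdom ε1 = some εd → gcod ε1 = some εc → gmeet ε2 εd = some ε →
      Step (Tm.app (Tm.val ε1 (Raw.rlam x Gx t) (GType.arrow GA GB)) (Tm.val ε2 u Gu))
           (Res.term (Tm.asc εc (substTm x (Tm.val ε u Gx) t) GB))
  | betaErr {ε1 ε2 εd : GType} {x Gx t GA GB u Gu} :
      gdom ε1 = some εd → gmeet ε2 εd = none →
      Step (Tm.app (Tm.val ε1 (Raw.rlam x Gx t) (GType.arrow GA GB)) (Tm.val ε2 u Gu))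
           Res.error
  | appL {t1 t1' t2} : Step t1 (Res.term t1') →
      Step (Tm.app t1 t2) (Res.term (Tm.app t1' t2))
  | appLErr {t1 t2} : Step t1 Res.error → Step (Tm.app t1 t2) Res.error
  | appR {ε u G t2 t2'} : Step t2 (Res.term t2') →
      Step (Tm.app (Tm.val ε u G) t2) (Res.term (Tm.app (Tm.val ε u G) t2'))
  | appRErr {ε u G t2} : Step t2 Res.error →
      Step (Tm.app (Tm.val ε u G) t2) Res.error
  | ascCong {ε t t' G} : Step t (Res.term t') →
      Step (Tm.asc ε t G) (Res.term (Tm.asc ε t' G))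
  | ascCongErr {ε t G} : Step t Res.error → Step (Tm.asc ε t G) Res.error


theorem sprec_refl : ∀ G : GType, SPrec G G := by
  intro G; induction G with
  | int => exact SPrec.int
  | bool => exact SPrec.bool
  | unk => exact SPrec.unk _
  | arrow a b ha hb => exact SPrec.arrow ha hb

theorem sprec_trans {a b c : GType} (h1 : SPrec a b) (h2 : SPrec b c) : SPrec a c := by
  induction h2 generalizing a with
  | unk => exact SPrec.unk _
  | int => exact h1
  | bool => exact h1
  | arrow _ _ ih1 ih2 =>
    cases h1 with
    | arrow p q => exact SPrec.arrow (ih1 p) (ih2 q)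

theorem gmeet_le : ∀ a b c : GType, gmeet a b = some c → SPrec c a ∧ SPrec c b := by
  intro a
  induction a with
  | int => intro b c h; cases b <;> simp [gmeet] at h <;> subst h <;>
      exact ⟨SPrec.int, by first | exact SPrec.int | exact SPrec.unk _⟩
  | bool => intro b c h; cases b <;> simp [gmeet] at h <;> subst h <;>
      exact ⟨SPrec.bool, by first | exact SPrec.bool | exact SPrec.unk _⟩
  | unk => intro b c h; cases b <;> simp [gmeet] at h <;> subst h <;>
      exact ⟨SPrec.unk _, sprec_refl _⟩
  | arrow a1 a2 ih1 ih2 =>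
    intro b c h
    cases b with
    | unk => simp [gmeet] at h; subst h; exact ⟨sprec_refl _, SPrec.unk _⟩
    | int => simp [gmeet] at h
    | bool => simp [gmeet] at h
    | arrow b1 b2 =>
      simp only [gmeet] at h
      cases hx : gmeet a1 b1 with
      | none => rw [hx] at h; cases hy : gmeet a2 b2 <;> rw [hy] at h <;> simp at h
      | some x =>
        rw [hx] at h
        cases hy : gmeet a2 b2 with
        | none => rw [hy] at h; simp at h
        | some y =>
          rw [hy] at h; simp at h; subst h
          obtain ⟨p1, p2⟩ := ih1 b1 x hx
          obtain ⟨q1, q2⟩ := ih2 b2 y hy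
          exact ⟨SPrec.arrow p1 q1, SPrec.arrow p2 q2⟩

theorem weaken :
    ∀ {Γ t G}, HasTy Γ t G → ∀ Δ, (∀ y A, Γ y = some A → Δ y = some A) → HasTy Δ t G := by
  intro Γ t G h
  refine HasTy.rec (motive_1 := fun Γ t G _ => ∀ Δ, (∀ y A, Γ y = some A → Δ y = some A) → HasTy Δ t G)
    (motive_2 := fun Γ u G _ => ∀ Δ, (∀ y A, Γ y = some A → Δ y = some A) → RawTy Δ u G)
    ?_ ?_ ?_ ?_ ?_ ?_ ?_ h
  · intro Γ x G hx Δ hsub; exact HasTy.var (hsub _ _ hx)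
  · intro Γ ε u G1 G2 _ s1 s2 ih Δ hsub; exact HasTy.val (ih Δ hsub) s1 s2
  · intro Γ t1 t2 G1 G2 _ _ ih1 ih2 Δ hsub; exact HasTy.app (ih1 Δ hsub) (ih2 Δ hsub)
  · intro Γ ε t G1 G2 _ s1 s2 ih Δ hsub; exact HasTy.asc (ih Δ hsub) s1 s2
  · intro Γ b Δ _; exact RawTy.rbool
  · intro Γ n Δ _; exact RawTy.rint
  · intro Γ x G1 t G2 _ ih Δ hsub
    refine RawTy.rlam (ih (upd Δ x G1) ?_)
    intro y A hy
    by_cases hyx : y = x <;> simp [upd, hyx] at hy ⊢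
    · exact hy
    · exact hsub _ _ hy

theorem subst_pres :
    ∀ {Γ' t Gt}, HasTy Γ' t Gt → ∀ Γ x Gx v, Γ' = upd Γ x Gx → HasTy emptyCtx v Gx →
      HasTy Γ (substTm x v t) Gt := by
  intro Γ' t Gt h
  refine HasTy.rec
    (motive_1 := fun Γ' t Gt _ => ∀ Γ x Gx v, Γ' = upd Γ x Gx → HasTy emptyCtx v Gx →
      HasTy Γ (substTm x v t) Gt)
    (motive_2 := fun Γ' u Gt _ => ∀ Γ x Gx v, Γ' = upd Γ x Gx → HasTy emptyCtx v Gx →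
      RawTy Γ (substRaw x v u) Gt)
    ?_ ?_ ?_ ?_ ?_ ?_ ?_ h
  · intro Γ' y G hy Γ x Gx v hEq hv
    subst hEq
    by_cases hyx : y = x
    · subst hyx
      simp [upd] at hy
      subst hy
      simp [substTm]
      exact weaken hv Γ (fun z A hz => by simp [emptyCtx] at hz)
    · simp [upd, hyx] at hy
      simp [substTm, hyx]
      exact HasTy.var hy
  · intro Γ' ε u G1 G2 _ s1 s2 ih Γ x Gx v hEq hv
    exact HasTy.val (ih Γ x Gx v hEq hv) s1 s2
  · intro Γ' t1 t2 G1 G2 _ _ ih1 ih2 Γ x Gx v hEq hv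
    exact HasTy.app (ih1 Γ x Gx v hEq hv) (ih2 Γ x Gx v hEq hv)
  · intro Γ' ε t G1 G2 _ s1 s2 ih Γ x Gx v hEq hv
    exact HasTy.asc (ih Γ x Gx v hEq hv) s1 s2
  · intro _ b Γ x Gx v _ _; exact RawTy.rbool
  · intro _ n Γ x Gx v _ _; exact RawTy.rint
  · intro Γ' y Gy t G2 ht ih Γ x Gx v hEq hv
    subst hEq
    by_cases hyx : y = x
    · subst hyx
      simp [substRaw]
      refine RawTy.rlam (weaken ht (upd Γ y Gy) ?_)
      intro z A hz
      by_cases hzy : z = y <;> simp [upd, hzy] at hz ⊢ <;> exact hz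
    · simp [substRaw, hyx]
      refine RawTy.rlam (ih (upd Γ y Gy) x Gx v ?_ hv)
      funext z
      by_cases hzy : z = y <;> by_cases hzx : z = x
      · exact absurd (hzy.symm.trans hzx) hyx
      · simp [upd, hzy, hzx, hyx]
      · simp [upd, hzy, hzx, Ne.symm hyx]
      · simp [upd, hzy, hzx]

theorem pres_aux : ∀ t r, Step t r → ∀ G, HasTy emptyCtx t G →
    ∀ t', r = Res.term t' → HasTy emptyCtx t' G := by
  intro t r h
  induction h with
  | ascv hmeet =>
    intro G hty t' hEq
    cases hEq
    cases hty with
    | asc hv s1 s2 =>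
      cases hv with
      | val hu p1 p2 =>
        obtain ⟨m1, m2⟩ := gmeet_le _ _ _ hmeet
        exact HasTy.val hu (sprec_trans m1 p1) (sprec_trans m2 s2)
  | ascvErr hmeet => intro G _ t' hEq; cases hEq
  | beta hdom hcod hmeet =>
    intro G hty t' hEq
    cases hEq
    cases hty with
    | app h1 h2 =>
      cases h1 with
      | val hu p1 p2 =>
        cases hu with
        | rlam ht =>
          cases p1 with
          | arrow pd pc =>
            cases p2 with
            | arrow qd qc =>
              simp [gdom] at hdom
              simp [gcod] at hcod
              subst hdom; subst hcod
              cases h2 with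
              | val hu2 r1 r2 =>
                obtain ⟨m1, m2⟩ := gmeet_le _ _ _ hmeet
                refine HasTy.asc (G1 := _) (subst_pres ht _ _ _ _ rfl ?_) pc qc
                exact HasTy.val hu2 (sprec_trans m1 r1) (sprec_trans m2 pd)
  | betaErr _ _ => intro G _ t' hEq; cases hEq
  | appL _ ih =>
    intro G hty t' hEq
    cases hEq
    cases hty with
    | app h1 h2 => exact HasTy.app (ih _ h1 _ rfl) h2
  | appLErr _ _ => intro G _ t' hEq; cases hEq
  | appR _ ih =>
    intro G hty t' hEq
    cases hEq
    cases hty with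
    | app h1 h2 => exact HasTy.app h1 (ih _ h2 _ rfl)
  | appRErr _ _ => intro G _ t' hEq; cases hEq
  | ascCong _ ih =>
    intro G hty t' hEq
    cases hEq
    cases hty with
    | asc h1 s1 s2 => exact HasTy.asc (ih _ h1 _ rfl) s1 s2
  | ascCongErr _ _ => intro G _ t' hEq; cases hEq

/-- Type preservation: reduction to a term preserves typing. -/
theorem preservation :
    ∀ (t t' : Tm) (G : GType),
      HasTy emptyCtx t G → Step t (Res.term t') → HasTy emptyCtx t' G := by
  intro t t' G h1 h2
  exact pres_aux t _ h2 G h1 t' rfl
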